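/- Let A be an m×m Boolean matrix, n = C(m,2), and B the n×n matrix indexed by 2-element subsets of {1,...,m} with B[a,b]=1 iff rows a and columns b of A form an all-ones 2×2 submatrix. Then the complement matrix B̄ can be implemented by a depth-3 rectifier circuit with O(m²) = O(n) edges; in particular OR_3(B̄) = O(n). -/

import Mathlib

open Finset

/-- Weight of a Boolean matrix: the number of entries equal to `true` (ones). -/
def weight {α β : Type} [Fintype α] [Fintype β] (M : α → β → Bool) : ℕ :=
  (Finset.univ.filter (fun p : α × β => M p.1 p.2 = true)).card

/-- Number of ones in row `i` of the matrix `M`. -/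
def rowOnes {α β : Type} [Fintype β] (M : α → β → Bool) (i : α) : ℕ :=
  (Finset.univ.filter (fun j => M i j = true)).card

/-- A matrix is `k`-free if it contains no all-ones `k × k` submatrix. -/
def kFree {α β : Type} (M : α → β → Bool) (k : ℕ) : Prop :=
  ¬ ∃ (R : Finset α) (C : Finset β), R.card = k ∧ C.card = k ∧
      ∀ i ∈ R, ∀ j ∈ C, M i j = true

/-- The 2-element subsets of `{1, …, m}` (realized as `Fin m`). -/
abbrev Pairs (m : ℕ) := {s : Finset (Fin m) // s.card = 2}

/-- The derived matrix `B`, indexed by 2-element subsets: `B[a,b] = 1` iff the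
`2 × 2` submatrix of `A` with row set `a` and column set `b` is all ones. -/
def derivedB {m : ℕ} (A : Fin m → Fin m → Bool) (a b : Pairs m) : Bool :=
  decide (∀ i ∈ a.1, ∀ j ∈ b.1, A i j = true)

/-- A rectifier circuit with outputs indexed by `α` and inputs indexed by `β`:
a finite DAG together with a choice of an input vertex for each `β` and an
output vertex for each `α`. Complexity is the number of edges. -/
structure RectCircuit (α β : Type) where
  V : ℕ
  edges : Finset (Fin V × Fin V)
  inputs : β → Fin V
  outputs : α → Fin V
  acyclic : ∀ v : Fin V, ¬ Relation.TransGen (fun u w => (u, w) ∈ edges) v v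

/-- A rectifier circuit implements `M` iff `M i j = 1` exactly when there is a
directed path from input `j` to output `i`. -/
def RectCircuit.implements {α β : Type} (C : RectCircuit α β) (M : α → β → Bool) : Prop :=
  ∀ i j, M i j = true ↔
    Relation.ReflTransGen (fun u w => (u, w) ∈ C.edges) (C.inputs j) (C.outputs i)

/-- A circuit has depth at most `d` if every directed path has at most `d` edges. -/
def RectCircuit.depthLE {α β : Type} (C : RectCircuit α β) (d : ℕ) : Prop :=
  ∀ (f : ℕ → Fin C.V) (L : ℕ), (∀ i < L, (f i, f (i + 1)) ∈ C.edges) → L ≤ d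

/-- `OR(M)`: the minimal number of edges of a rectifier circuit implementing `M`. -/
noncomputable def ORc {α β : Type} (M : α → β → Bool) : ℕ :=
  sInf {k | ∃ C : RectCircuit α β, C.implements M ∧ C.edges.card = k}

/-- `OR_d(M)`: the minimal number of edges of a depth-`d` rectifier circuit
implementing `M`. -/
noncomputable def ORd {α β : Type} (d : ℕ) (M : α → β → Bool) : ℕ :=
  sInf {k | ∃ C : RectCircuit α β, C.implements M ∧ C.depthLE d ∧ C.edges.card = k}

/-!
Since `B̄[a,b] = 1` iff `Ā[i,j] = 1` for some `i ∈ a`, `j ∈ b`, the matrix `B̄` is the Boolean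
product `P · Ā · Pᵀ` of three matrices, where `P[a,i] = 1` iff `i ∈ a`. A Boolean product of three
matrices is computed by the layered depth-3 circuit whose edges are the ones of the factors, and
each factor has at most `m²` ones (`P` has exactly `2·C(m,2) = m(m-1)`).
-/

section Weight

variable {α β : Type} [Fintype α] [Fintype β]

theorem weight_eq_sum_rowOnes (M : α → β → Bool) : weight M = ∑ a, rowOnes M a := by
  simp only [weight, rowOnes, card_filter, ← Fintype.sum_prod_type']

theorem weight_transpose (M : α → β → Bool) : weight (fun j i => M i j) = weight M :=
  card_equiv (Equiv.prodComm β α) (by simp)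

theorem weight_le_card_mul_card (M : α → β → Bool) :
    weight M ≤ Fintype.card α * Fintype.card β :=
  (card_filter_le _ _).trans_eq (by simp)

end Weight

theorem weight_mem_pairs (m : ℕ) :
    weight (fun (a : Pairs m) (i : Fin m) => decide (i ∈ a.1)) = m * (m - 1) := by
  have hcard : Fintype.card (Pairs m) = m.choose 2 := by
    rw [Fintype.card_finset_len, Fintype.card_fin]
  have hrow (a : Pairs m) : rowOnes (fun (a : Pairs m) (i : Fin m) => decide (i ∈ a.1)) a = 2 := by
    simp [rowOnes, a.2]
  rw [weight_eq_sum_rowOnes, Fintype.sum_congr _ _ hrow, sum_const, card_univ, hcard,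
    smul_eq_mul, Nat.choose_two_right, Nat.div_two_mul_two_of_even (Nat.even_mul_pred_self m)]

theorem ORd_le_card_edges {α β : Type} {d : ℕ} {M : α → β → Bool} (C : RectCircuit α β)
    (hC : C.implements M) (hd : C.depthLE d) : ORd d M ≤ C.edges.card :=
  Nat.sInf_le ⟨C, hC, hd, rfl⟩

namespace RectCircuit

variable {α β N : Type} [Fintype N] (E : Finset (N × N)) (rank : N → ℕ)
  (hE : ∀ p ∈ E, rank p.1 < rank p.2) (inputs : β → N) (outputs : α → N)

noncomputable def ofGraded : RectCircuit α β where
  V := Fintype.card N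
  edges := E.map ((Fintype.equivFin N).prodCongr (Fintype.equivFin N)).toEmbedding
  inputs := Fintype.equivFin N ∘ inputs
  outputs := Fintype.equivFin N ∘ outputs
  acyclic v hv := by
    have hlt := hv.lift (rank ∘ (Fintype.equivFin N).symm) fun _ _ hxy =>
      hE _ (mem_map_equiv.mp hxy)
    rw [Relation.transGen_eq_self] at hlt
    exact lt_irrefl _ hlt

theorem mem_edges_ofGraded {x y : Fin (ofGraded E rank hE inputs outputs).V} :
    (x, y) ∈ (ofGraded E rank hE inputs outputs).edges ↔
      ((Fintype.equivFin N).symm x, (Fintype.equivFin N).symm y) ∈ E :=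
  mem_map_equiv

theorem implements_ofGraded {M : α → β → Bool}
    (hM : ∀ a b, M a b = true ↔
      Relation.ReflTransGen (fun u v => (u, v) ∈ E) (inputs b) (outputs a)) :
    (ofGraded E rank hE inputs outputs).implements M := by
  intro a b
  simp only [hM, mem_edges_ofGraded]
  constructor
  · exact Relation.ReflTransGen.lift (Fintype.equivFin N)
      (fun _ _ huv => by simpa [Function.onFun] using huv) _ _
  · intro h
    simpa [ofGraded, Function.onFun] using
      Relation.ReflTransGen.lift (p := fun u v => (u, v) ∈ E) (Fintype.equivFin N).symm
        (fun _ _ hxy => hxy) _ _ h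

theorem depthLE_ofGraded {d : ℕ} (hd : ∀ v, rank v ≤ d) :
    (ofGraded E rank hE inputs outputs).depthLE d := by
  intro f L hf
  have hrank : ∀ k ≤ L, k ≤ rank ((Fintype.equivFin N).symm (f k)) := by
    intro k hk
    induction k with
    | zero => exact Nat.zero_le _
    | succ k ih =>
      have hstep := hE _ ((mem_edges_ofGraded E rank hE inputs outputs).mp (hf k hk))
      dsimp only at hstep
      have := ih (by omega)
      omega
  exact (hrank L le_rfl).trans (hd _)

theorem card_edges_ofGraded : (ofGraded E rank hE inputs outputs).edges.card = E.card :=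
  card_map _

end RectCircuit

section ThreeLayer

variable {α ι κ β : Type}

def threeLayerRank : β ⊕ κ ⊕ ι ⊕ α → ℕ
  | .inl _ => 0
  | .inr (.inl _) => 1
  | .inr (.inr (.inl _)) => 2
  | .inr (.inr (.inr _)) => 3

theorem threeLayerRank_le (v : β ⊕ κ ⊕ ι ⊕ α) : threeLayerRank v ≤ 3 := by
  rcases v with _ | _ | _ | _ <;> simp [threeLayerRank]

variable [Fintype α] [Fintype ι] [Fintype κ] [Fintype β]
  [DecidableEq α] [DecidableEq ι] [DecidableEq κ] [DecidableEq β]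
  (P : α → ι → Bool) (Q : ι → κ → Bool) (R : κ → β → Bool)

/-- The layers `β`, `κ`, `ι`, `α` run from inputs to outputs; input `b` is joined to `k` when
`R k b`, `k` to `i` when `Q i k`, and `i` to output `a` when `P a i`. -/
def threeLayerEdges : Finset ((β ⊕ κ ⊕ ι ⊕ α) × (β ⊕ κ ⊕ ι ⊕ α)) :=
  ((univ.filter fun p : κ × β => R p.1 p.2 = true).image
      fun p => (.inl p.2, .inr (.inl p.1))) ∪
    ((univ.filter fun p : ι × κ => Q p.1 p.2 = true).image
      fun p => (.inr (.inl p.2), .inr (.inr (.inl p.1)))) ∪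
    ((univ.filter fun p : α × ι => P p.1 p.2 = true).image
      fun p => (.inr (.inr (.inl p.2)), .inr (.inr (.inr p.1))))

def threeLayerReach (b : β) : β ⊕ κ ⊕ ι ⊕ α → Prop
  | .inl b' => b' = b
  | .inr (.inl k) => R k b = true
  | .inr (.inr (.inl i)) => ∃ k, Q i k = true ∧ R k b = true
  | .inr (.inr (.inr a)) => ∃ i k, P a i = true ∧ Q i k = true ∧ R k b = true

theorem rank_lt_of_mem_threeLayerEdges :
    ∀ p ∈ threeLayerEdges P Q R, threeLayerRank p.1 < threeLayerRank p.2 := by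
  simp [threeLayerEdges, or_imp, forall_and, threeLayerRank]

theorem card_threeLayerEdges_le :
    (threeLayerEdges P Q R).card ≤ weight P + weight Q + weight R := by
  calc (threeLayerEdges P Q R).card
      ≤ weight R + weight Q + weight P := by
        refine (card_union_le _ _).trans (add_le_add ((card_union_le _ _).trans ?_) card_image_le)
        exact add_le_add card_image_le card_image_le
    _ = weight P + weight Q + weight R := by ring

theorem threeLayerReach_of_reflTransGen {b : β} {v : β ⊕ κ ⊕ ι ⊕ α}
    (h : Relation.ReflTransGen (fun u w => (u, w) ∈ threeLayerEdges P Q R) (.inl b) v) :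
    threeLayerReach P Q R b v := by
  induction h with
  | refl => rfl
  | tail _ huw ih =>
    simp only [threeLayerEdges, mem_union, mem_image, mem_filter, mem_univ, true_and,
      Prod.exists, Prod.mk.injEq] at huw
    rcases huw with (⟨k, b', hR, rfl, rfl⟩ | ⟨i, k, hQ, rfl, rfl⟩) | ⟨a, i, hP, rfl, rfl⟩
    · exact ih ▸ hR
    · exact ⟨k, hQ, ih⟩
    · exact ⟨i, ih.imp fun k hk => ⟨hP, hk⟩⟩

theorem reflTransGen_threeLayerEdges_iff {b : β} {a : α} :
    Relation.ReflTransGen (fun u w => (u, w) ∈ threeLayerEdges P Q R) (.inl b)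
        (.inr (.inr (.inr a))) ↔ ∃ i k, P a i = true ∧ Q i k = true ∧ R k b = true := by
  refine ⟨threeLayerReach_of_reflTransGen P Q R, ?_⟩
  rintro ⟨i, k, hP, hQ, hR⟩
  refine .head (b := .inr (.inl k)) ?_ (.head (b := .inr (.inr (.inl i))) ?_ (.single ?_)) <;>
    simp [threeLayerEdges, hP, hQ, hR]

end ThreeLayer

theorem ORd_three_le_weight_add {α ι κ β : Type}
    [Fintype α] [Fintype ι] [Fintype κ] [Fintype β]
    {M : α → β → Bool} (P : α → ι → Bool) (Q : ι → κ → Bool) (R : κ → β → Bool)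
    (hM : ∀ a b, M a b = true ↔ ∃ i k, P a i = true ∧ Q i k = true ∧ R k b = true) :
    ORd 3 M ≤ weight P + weight Q + weight R := by
  classical
  let C : RectCircuit α β := .ofGraded (threeLayerEdges P Q R) threeLayerRank
    (rank_lt_of_mem_threeLayerEdges P Q R) Sum.inl (fun a => .inr (.inr (.inr a)))
  calc ORd 3 M ≤ C.edges.card :=
        ORd_le_card_edges C
          (RectCircuit.implements_ofGraded _ _ _ _ _ fun a b =>
            (hM a b).trans (reflTransGen_threeLayerEdges_iff P Q R).symm)
          (RectCircuit.depthLE_ofGraded _ _ _ _ _ threeLayerRank_le)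
    _ = (threeLayerEdges P Q R).card := RectCircuit.card_edges_ofGraded ..
    _ ≤ weight P + weight Q + weight R := card_threeLayerEdges_le P Q R

/-- The complement of the derived matrix `B` can be implemented by
a depth-3 rectifier circuit with `O(m²) = O(n)` edges: `OR₃(B̄) = O(m²)`. -/
theorem stmt10 : ∃ c : ℕ, ∀ (m : ℕ) (A : Fin m → Fin m → Bool),
    ORd 3 (fun a b => !derivedB A a b) ≤ c * m ^ 2 := by
  refine ⟨3, fun m A => ?_⟩
  calc ORd 3 (fun a b => !derivedB A a b)
      ≤ weight (fun (a : Pairs m) (i : Fin m) => decide (i ∈ a.1)) + weight (fun i j => !A i j) +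
          weight (fun (j : Fin m) (b : Pairs m) => decide (j ∈ b.1)) :=
        ORd_three_le_weight_add _ _ _ fun a b => by simp [derivedB, and_comm]
    _ ≤ m * (m - 1) + m * m + m * (m - 1) := by
        rw [weight_transpose (fun (b : Pairs m) (j : Fin m) => decide (j ∈ b.1)), weight_mem_pairs]
        gcongr
        simpa using weight_le_card_mul_card (fun i j => !A i j)
    _ ≤ m * m + m * m + m * m := by gcongr <;> exact Nat.sub_le m 1
    _ = 3 * m ^ 2 := by ring
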